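/- The additive order of ε in the abelian group A_𝒯 is at least (q−1)/gcd(q−1, 3). -/

import Mathlib

/-- A triangle presentation compatible with the bijection `lam : P ≃ L`:
a set of triples satisfying conditions (i), (ii), (iii). -/
structure IsTrianglePresentation {P L : Type*} [Membership P L]
    (lam : P ≃ L) (T : Set (P × P × P)) : Prop where
  exists_iff : ∀ x y : P, (∃ z : P, (x, y, z) ∈ T) ↔ y ∈ lam x
  cyclic : ∀ x y z : P, (x, y, z) ∈ T → (y, z, x) ∈ T
  unique : ∀ x y z z' : P, (x, y, z) ∈ T → (x, y, z') ∈ T → z = z'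

open Classical in
/-- Relators of `A_𝒯`: generators are the points of `P` plus one extra generator
`ε` (encoded as `none : Option P`). -/
def triangleRels {P L : Type*} [Fintype P] [Membership P L]
    (lam : P ≃ L) (T : Set (P × P × P)) : Set (FreeAbelianGroup (Option P)) :=
  (Set.range fun x : P =>
      (∑ y ∈ Finset.univ.filter fun y : P => ¬ y ∈ lam x, FreeAbelianGroup.of (some y))
        - FreeAbelianGroup.of (some x)) ∪
  ((fun t : P × P × P =>
      FreeAbelianGroup.of (some t.1) + FreeAbelianGroup.of (some t.2.1)
        + FreeAbelianGroup.of (some t.2.2) - FreeAbelianGroup.of (none : Option P)) '' T) ∪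
  {(∑ x : P, FreeAbelianGroup.of (some x)) - FreeAbelianGroup.of (none : Option P)}

/-- The abelian group `A_𝒯`, presented by generators `P ∪ {ε}` and the relations above. -/
abbrev TriangleGroup {P L : Type*} [Fintype P] [Membership P L]
    (lam : P ≃ L) (T : Set (P × P × P)) : Type _ :=
  FreeAbelianGroup (Option P) ⧸ AddSubgroup.closure (triangleRels lam T)

/-- The image in `A_𝒯` of the generator corresponding to a point `x ∈ P`. -/
def triangleGen {P L : Type*} [Fintype P] [Membership P L]
    (lam : P ≃ L) (T : Set (P × P × P)) (x : P) : TriangleGroup lam T :=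
  QuotientAddGroup.mk (FreeAbelianGroup.of (some x))

/-- The image in `A_𝒯` of the generator `ε`. -/
def triangleEps {P L : Type*} [Fintype P] [Membership P L]
    (lam : P ≃ L) (T : Set (P × P × P)) : TriangleGroup lam T :=
  QuotientAddGroup.mk (FreeAbelianGroup.of (none : Option P))
/-! Sending every point to `1` and `ε` to `3` respects all relations of `A_𝒯` modulo `q - 1`:
a line misses `q² ≡ 1` points, and there are `q² + q + 1 ≡ 3` points in all. So the order of `ε`
is a multiple of the order of `3` in `ℤ/(q - 1)`, which is `(q - 1) / gcd(q - 1, 3)`, provided it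
is finite. It is: every point lies off exactly `q²` lines, so summing the relations
`∑_{y ∉ λ(x)} y = x` over all `x` gives `q² ε = ε`. -/

open Finset Configuration ProjectivePlane

theorem Finset.sum_sum_filter_eq_sum_card_filter_nsmul {α β M : Type*} [Fintype α] [Fintype β]
    [AddCommMonoid M] (R : α → β → Prop) [∀ a, DecidablePred (R a)] [∀ b, DecidablePred (R · b)]
    (g : β → M) : ∑ a, ∑ b with R a b, g b = ∑ b, #{a | R a b} • g b := by
  rw [sum_comm' (s' := fun b => {a | R a b}) (t' := univ) (by simp)]
  simp only [sum_const]

namespace Configuration.ProjectivePlane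

variable {P L : Type*} [Membership P L] [ProjectivePlane P L]

theorem card_filter_notMem [Fintype P] [Finite L] (l : L) [DecidablePred (· ∈ l)] :
    #{p : P | p ∉ l} = order P L ^ 2 := by
  have h := card_filter_add_card_filter_not (s := univ) (· ∈ l)
  rw [card_univ, card_points P L, ← Fintype.card_subtype, ← Nat.card_eq_fintype_card] at h
  change pointCount P l + _ = _ at h
  rw [pointCount_eq] at h
  omega

theorem card_filter_notMem_equiv [Fintype P] [Finite L] (e : P ≃ L) (p : P)
    [DecidablePred (p ∈ e ·)] : #{x : P | p ∉ e x} = order P L ^ 2 := by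
  have h := card_filter_add_card_filter_not (s := univ) (p ∈ e ·)
  rw [card_univ, card_points P L, ← Fintype.card_subtype, ← Nat.card_eq_fintype_card,
    Nat.card_congr (e.subtypeEquiv (q := (p ∈ ·)) fun _ => Iff.rfl)] at h
  change lineCount L p + _ = _ at h
  rw [lineCount_eq] at h
  omega

end Configuration.ProjectivePlane

section TriangleGroup

variable {P L : Type*} [Fintype P] [Membership P L] (lam : P ≃ L) (T : Set (P × P × P))

theorem mk_eq_zero_of_mem_triangleRels {r : FreeAbelianGroup (Option P)}
    (hr : r ∈ triangleRels lam T) : (QuotientAddGroup.mk r : TriangleGroup lam T) = 0 :=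
  (QuotientAddGroup.eq_zero_iff r).mpr (AddSubgroup.subset_closure hr)

open Classical in
theorem sum_triangleGen_notMem (x : P) :
    ∑ y with y ∉ lam x, triangleGen lam T y = triangleGen lam T x := by
  have h := mk_eq_zero_of_mem_triangleRels lam T (Or.inl (Or.inl ⟨x, rfl⟩))
  rwa [QuotientAddGroup.mk_sub, QuotientAddGroup.mk_sum, sub_eq_zero] at h

theorem sum_triangleGen : ∑ x, triangleGen lam T x = triangleEps lam T := by
  have h := mk_eq_zero_of_mem_triangleRels lam T (Or.inr rfl)
  rwa [QuotientAddGroup.mk_sub, QuotientAddGroup.mk_sum, sub_eq_zero] at h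

variable [ProjectivePlane P L] [Finite L]

theorem order_sq_nsmul_triangleEps :
    order P L ^ 2 • triangleEps lam T = triangleEps lam T := by
  classical
  calc order P L ^ 2 • triangleEps lam T
      = ∑ y, #{x | y ∉ lam x} • triangleGen lam T y := by
        simp only [card_filter_notMem_equiv, ← smul_sum, sum_triangleGen]
    _ = ∑ x, ∑ y with y ∉ lam x, triangleGen lam T y :=
        (sum_sum_filter_eq_sum_card_filter_nsmul _ _).symm
    _ = triangleEps lam T := by simp only [sum_triangleGen_notMem, sum_triangleGen]

theorem isOfFinAddOrder_triangleEps : IsOfFinAddOrder (triangleEps lam T) := by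
  have h1 : 1 < order P L ^ 2 := one_lt_pow₀ (one_lt_order P L) two_ne_zero
  refine isOfFinAddOrder_iff_nsmul_eq_zero.mpr ⟨order P L ^ 2 - 1, by omega, ?_⟩
  rw [sub_nsmul _ h1.le, order_sq_nsmul_triangleEps, one_nsmul, add_neg_cancel]

variable {n : ℕ}

theorem closure_triangleRels_le_ker (hn : (order P L : ZMod n) = 1) :
    AddSubgroup.closure (triangleRels lam T) ≤
      (FreeAbelianGroup.lift fun o : Option P => o.elim (3 : ZMod n) fun _ => 1).ker := by
  rw [AddSubgroup.closure_le]
  rintro r (⟨⟨x, rfl⟩ | ⟨t, -, rfl⟩⟩ | rfl) <;>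
    norm_num [card_filter_notMem, card_points P L, hn]

def triangleGroupToZMod (hn : (order P L : ZMod n) = 1) : TriangleGroup lam T →+ ZMod n :=
  QuotientAddGroup.lift _ _ (closure_triangleRels_le_ker lam T hn)

theorem triangleGroupToZMod_triangleEps (hn : (order P L : ZMod n) = 1) :
    triangleGroupToZMod lam T hn (triangleEps lam T) = 3 :=
  FreeAbelianGroup.lift_apply_of _ _

end TriangleGroup

open Classical in
theorem stmt5_general {P L : Type*} [Fintype P] [Membership P L]
    [Configuration.ProjectivePlane P L] (q : ℕ)
    (horder : Configuration.ProjectivePlane.order P L = q)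
    (lam : P ≃ L) (T : Set (P × P × P)) :
    (q - 1) / Nat.gcd (q - 1) 3 ≤ addOrderOf (triangleEps lam T) := by
  have : Finite L := .of_equiv P lam
  obtain ⟨n, rfl⟩ : ∃ n, q = n + 1 := ⟨q - 1, by have := one_lt_order P L; omega⟩
  have hn : (order P L : ZMod n) = 1 := by simp [horder]
  rw [Nat.add_sub_cancel, ← ZMod.addOrderOf_coe' n three_ne_zero, Nat.cast_ofNat,
    ← triangleGroupToZMod_triangleEps lam T hn]
  exact Nat.le_of_dvd (isOfFinAddOrder_triangleEps lam T).addOrderOf_pos (addOrderOf_map_dvd _ _)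

open Classical in
theorem stmt5 {P L : Type*} [Fintype P] [Fintype L] [Membership P L]
    [Configuration.ProjectivePlane P L] (q : ℕ) (hq : 2 ≤ q)
    (horder : Configuration.ProjectivePlane.order P L = q)
    (lam : P ≃ L) (T : Set (P × P × P)) (hT : IsTrianglePresentation lam T) :
    (q - 1) / Nat.gcd (q - 1) 3 ≤ addOrderOf (triangleEps lam T) :=
  stmt5_general q horder lam T
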